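/- For every colouring π of a finite graph G there exists a coarsest equitable colouring π' with π' ⪯ π; that is, π' is equitable, π' ⪯ π, and every equitable colouring σ with σ ⪯ π satisfies that each cell of σ is contained in a cell of π'. Moreover, π' is unique up to the order of its cells (the partition into cells is unique). -/

import Mathlib

/-- Relabelling action of a permutation on a graph: `v^g` adjacent to `w^g` iff `v` adjacent `w`. -/
def gactG {n : ℕ} (g : Equiv.Perm (Fin n)) (G : SimpleGraph (Fin n)) : SimpleGraph (Fin n) where
  Adj v w := G.Adj (g⁻¹ v) (g⁻¹ w)
  symm := ⟨by intro a b h; exact G.adj_symm h⟩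
  loopless := ⟨by intro a h; exact G.irrefl h⟩

/-- Relabelling action of a permutation on a colouring. -/
def gactC {n : ℕ} (g : Equiv.Perm (Fin n)) (π : Fin n → ℕ) : Fin n → ℕ :=
  fun v => π (g⁻¹ v)

/-- A colouring of `V`: a function surjective onto `{1,…,k}` for some `k`. -/
def IsCol {n : ℕ} (π : Fin n → ℕ) : Prop := ∃ k, Set.range π = Set.Icc 1 k

/-- `π'` is finer than or equal to `π`. -/
def FinerC {n : ℕ} (π' π : Fin n → ℕ) : Prop := ∀ v w, π v < π w → π' v < π' w

/-- Nodes of the search tree with child rule given by the target cells `Tc`. -/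
inductive IsTNode {n : ℕ} (Tc : List (Fin n) → Set (Fin n)) : List (Fin n) → Prop
  | root : IsTNode Tc []
  | child {ν : List (Fin n)} {w : Fin n} :
      IsTNode Tc ν → w ∈ Tc ν → IsTNode Tc (ν ++ [w])

/-- The labelled graph `G^π` for a (discrete) colouring `π`, as a set of labelled edges. -/
def relabelSet {n : ℕ} (G : SimpleGraph (Fin n)) (π : Fin n → ℕ) : Set (ℕ × ℕ) :=
  {p | ∃ v w, G.Adj v w ∧ π v = p.1 ∧ π w = p.2}

/-- Equitable colouring: same-coloured vertices have equally many neighbours of each colour. -/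
def IsEquit {n : ℕ} (G : SimpleGraph (Fin n)) (π : Fin n → ℕ) : Prop :=
  ∀ v w, π v = π w → ∀ j,
    {u | G.Adj v u ∧ π u = j}.ncard = {u | G.Adj w u ∧ π u = j}.ncard

/-!
The cells of the coarsest equitable refinement are the classes of the equivalence relation
generated by "`v` and `w` share a colour in some equitable colouring finer than `π`". This
relation is still equitable: a set that is a union of its classes is a union of cells of every
equitable `σ ⪯ π`, so the number of neighbours a vertex has in it is unchanged along each
generating step. Colouring the classes by their rank in the lexicographic order of
(`π`-colour, representative) turns the relation into a colouring `π' ⪯ π`.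
-/

variable {n : ℕ}

theorem FinerC.apply_eq_of_apply_eq {σ π : Fin n → ℕ} (h : FinerC σ π) {v w : Fin n}
    (hvw : σ v = σ w) : π v = π w := by
  rcases lt_trichotomy (π v) (π w) with hlt | heq | hgt
  · exact absurd hvw (h v w hlt).ne
  · exact heq
  · exact absurd hvw (h w v hgt).ne'

theorem IsEquit.ncard_adj_eq_of_saturated {G : SimpleGraph (Fin n)} {σ : Fin n → ℕ}
    (hσ : IsEquit G σ) {v w : Fin n} (hvw : σ v = σ w) (C : Set (Fin n))
    (hC : ∀ a b, σ a = σ b → a ∈ C → b ∈ C) :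
    {u | G.Adj v u ∧ u ∈ C}.ncard = {u | G.Adj w u ∧ u ∈ C}.ncard := by
  classical
  set J := C.toFinset.image σ
  have hsplit : ∀ x,
      {u | G.Adj x u ∧ u ∈ C}.ncard = ∑ j ∈ J, {u | G.Adj x u ∧ σ u = j}.ncard := by
    intro x
    rw [← Finset.coe_filter_univ, Set.ncard_coe_finset,
      Finset.card_eq_sum_card_fiberwise (f := σ) (t := J)
        (fun u hu => Finset.mem_image_of_mem σ (by simpa using (Finset.mem_filter.1 hu).2.2))]
    refine Finset.sum_congr rfl fun j hj => ?_
    obtain ⟨c, hc, rfl⟩ := Finset.mem_image.1 hj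
    rw [← Finset.coe_filter_univ, Set.ncard_coe_finset, Finset.filter_filter]
    congr 1
    ext u
    simp only [Finset.mem_filter, Finset.mem_univ, true_and]
    exact ⟨fun h => ⟨h.1.1, h.2⟩,
      fun h => ⟨⟨h.1, hC c u h.2.symm (Set.mem_toFinset.1 hc)⟩, h.2⟩⟩
  rw [hsplit v, hsplit w]
  exact Finset.sum_congr rfl fun j _ => hσ v w hvw j

theorem exists_isCol_lt_iff {α : Type*} [LinearOrder α] (f : Fin n → α) :
    ∃ c : Fin n → ℕ, IsCol c ∧ ∀ v w, c v < c w ↔ f v < f w := by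
  classical
  let S := Finset.univ.image f
  let e := S.orderIsoOfFin rfl
  have hS : ∀ v, f v ∈ S := fun v => Finset.mem_image_of_mem f (Finset.mem_univ v)
  refine ⟨fun v => (e.symm ⟨f v, hS v⟩ : ℕ) + 1, ⟨S.card, ?_⟩, fun v w => ?_⟩
  · ext m
    simp only [Set.mem_range, Set.mem_Icc]
    constructor
    · rintro ⟨v, rfl⟩
      exact ⟨Nat.le_add_left 1 _, (e.symm ⟨f v, hS v⟩).isLt⟩
    · rintro ⟨hm1, hmS⟩
      let i : Fin S.card := ⟨m - 1, by omega⟩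
      obtain ⟨v, -, hv⟩ := Finset.mem_image.1 (e i).2
      refine ⟨v, ?_⟩
      rw [show (⟨f v, hS v⟩ : S) = e i from Subtype.ext hv, e.symm_apply_apply]
      exact Nat.sub_add_cancel hm1
  · rw [add_lt_add_iff_right, ← Fin.lt_def, e.symm.lt_iff_lt, Subtype.mk_lt_mk]

theorem exists_isCol_finerC_of_le_ker {s : Setoid (Fin n)} (π : Fin n → ℕ)
    (hs : s ≤ Setoid.ker π) :
    ∃ c : Fin n → ℕ, IsCol c ∧ FinerC c π ∧ ∀ v w, c v = c w ↔ s v w := by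
  obtain ⟨c, hc, hlt⟩ := exists_isCol_lt_iff fun v => toLex (π v, (Quotient.mk s v).out)
  refine ⟨c, hc, fun v w h => (hlt v w).2 (Prod.Lex.toLex_lt_toLex.2 (Or.inl h)),
    fun v w => ?_⟩
  have hkey : c v = c w ↔
      toLex (π v, (Quotient.mk s v).out) = toLex (π w, (Quotient.mk s w).out) := by
    simp only [le_antisymm_iff, ← not_lt, hlt]
  rw [hkey, toLex_inj, Prod.mk.injEq, Quotient.out_inj, Quotient.eq]
  exact ⟨And.right, fun h => ⟨hs h, h⟩⟩

def equitableSetoid (G : SimpleGraph (Fin n)) (π : Fin n → ℕ) : Setoid (Fin n) :=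
  Relation.EqvGen.setoid fun v w =>
    ∃ σ : Fin n → ℕ, IsEquit G σ ∧ FinerC σ π ∧ σ v = σ w

theorem equitableSetoid_rel_of_apply_eq {G : SimpleGraph (Fin n)} {π σ : Fin n → ℕ}
    (hσ : IsEquit G σ) (hσπ : FinerC σ π) {v w : Fin n} (hvw : σ v = σ w) :
    equitableSetoid G π v w :=
  Relation.EqvGen.rel _ _ ⟨σ, hσ, hσπ, hvw⟩

theorem equitableSetoid_le_ker (G : SimpleGraph (Fin n)) (π : Fin n → ℕ) :
    equitableSetoid G π ≤ Setoid.ker π :=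
  Setoid.eqvGen_le fun _ _ ⟨_, _, hσπ, hvw⟩ => hσπ.apply_eq_of_apply_eq hvw

theorem ncard_adj_eq_of_equitableSetoid_rel {G : SimpleGraph (Fin n)} {π : Fin n → ℕ}
    (C : Set (Fin n)) (hC : ∀ a b, equitableSetoid G π a b → a ∈ C → b ∈ C) {v w : Fin n}
    (hvw : equitableSetoid G π v w) :
    {u | G.Adj v u ∧ u ∈ C}.ncard = {u | G.Adj w u ∧ u ∈ C}.ncard :=
  Setoid.eqvGen_le (s := Setoid.ker fun x => {u | G.Adj x u ∧ u ∈ C}.ncard)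
    (fun _ _ ⟨_, hσ, hσπ, hab⟩ => hσ.ncard_adj_eq_of_saturated hab C
      fun a b h => hC a b (equitableSetoid_rel_of_apply_eq hσ hσπ h)) hvw

theorem stmt15_general {n : ℕ} (G : SimpleGraph (Fin n)) (π : Fin n → ℕ) :
    ∃ π' : Fin n → ℕ, IsCol π' ∧ IsEquit G π' ∧ FinerC π' π ∧
      (∀ σ : Fin n → ℕ, IsCol σ → IsEquit G σ → FinerC σ π →
        ∀ j : ℕ, (σ ⁻¹' {j}).Nonempty → ∃ i : ℕ, σ ⁻¹' {j} ⊆ π' ⁻¹' {i}) ∧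
      (∀ π'' : Fin n → ℕ, IsCol π'' → IsEquit G π'' → FinerC π'' π →
        (∀ σ : Fin n → ℕ, IsCol σ → IsEquit G σ → FinerC σ π →
          ∀ j : ℕ, (σ ⁻¹' {j}).Nonempty → ∃ i : ℕ, σ ⁻¹' {j} ⊆ π'' ⁻¹' {i}) →
        ∀ v w, π'' v = π'' w ↔ π' v = π' w) := by
  obtain ⟨π', hcol, hfiner, hcell⟩ :=
    exists_isCol_finerC_of_le_ker π (equitableSetoid_le_ker G π)
  have hequit : IsEquit G π' := fun v w hvw j =>
    ncard_adj_eq_of_equitableSetoid_rel {u | π' u = j}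
      (fun a b hab (ha : π' a = j) => ((hcell a b).2 hab).symm.trans ha) ((hcell v w).1 hvw)
  refine ⟨π', hcol, hequit, hfiner, ?_, fun π'' _ hequit'' hfiner'' hcoarsest'' v w => ?_⟩
  · rintro σ - hσ hσπ j ⟨v, hv⟩
    exact ⟨π' v, fun w hw => ((hcell v w).2
      (equitableSetoid_rel_of_apply_eq hσ hσπ (hv.trans hw.symm))).symm⟩
  · refine ⟨fun h => (hcell v w).2 (equitableSetoid_rel_of_apply_eq hequit'' hfiner'' h),
      fun h => ?_⟩
    obtain ⟨i, hi⟩ := hcoarsest'' π' hcol hequit hfiner (π' v) ⟨v, rfl⟩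
    exact (hi rfl).trans (hi h.symm).symm

/-- Every colouring has a coarsest equitable refinement, unique up to the order of its cells. -/
theorem stmt15 {n : ℕ} (G : SimpleGraph (Fin n)) (π : Fin n → ℕ) (hπ : IsCol π) :
    ∃ π' : Fin n → ℕ, IsCol π' ∧ IsEquit G π' ∧ FinerC π' π ∧
      (∀ σ : Fin n → ℕ, IsCol σ → IsEquit G σ → FinerC σ π →
        ∀ j : ℕ, (σ ⁻¹' {j}).Nonempty → ∃ i : ℕ, σ ⁻¹' {j} ⊆ π' ⁻¹' {i}) ∧
      (∀ π'' : Fin n → ℕ, IsCol π'' → IsEquit G π'' → FinerC π'' π →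
        (∀ σ : Fin n → ℕ, IsCol σ → IsEquit G σ → FinerC σ π →
          ∀ j : ℕ, (σ ⁻¹' {j}).Nonempty → ∃ i : ℕ, σ ⁻¹' {j} ⊆ π'' ⁻¹' {i}) →
        ∀ v w, π'' v = π'' w ↔ π' v = π' w) :=
  stmt15_general G π
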